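/- If L is a finite-dimensional Lie algebra and N ⊆ Z*(L) is an ideal, then dim M(L/Z*(L)) = dim M(L) + dim(L² ∩ Z*(L)), where M denotes the Schur multiplier. -/

import Mathlib

open Module Function

universe u v

/-! ### Product of Lie algebras -/

section ProdLie

variable (k : Type) [Field k]
variable (L₁ : Type*) (L₂ : Type*) [LieRing L₁] [LieRing L₂]

instance Prod.instLieRing : LieRing (L₁ × L₂) where
  bracket x y := (⁅x.1, y.1⁆, ⁅x.2, y.2⁆)
  add_lie x y z := by ext <;> exact add_lie _ _ _
  lie_add x y z := by ext <;> exact lie_add _ _ _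
  lie_self x := by ext <;> exact lie_self _
  leibniz_lie x y z := by ext <;> exact leibniz_lie _ _ _

instance Prod.instLieAlgebra [LieAlgebra k L₁] [LieAlgebra k L₂] :
    LieAlgebra k (L₁ × L₂) where
  lie_smul c x y := by ext <;> exact lie_smul _ _ _

end ProdLie

section Defs

variable (k : Type) [Field k]
variable (L : Type u) [LieRing L] [LieAlgebra k L]

/-- The derived subalgebra `L² = ⁅L, L⁆` as a Lie ideal. -/
def derived : LieIdeal k L := ⁅(⊤ : LieIdeal k L), (⊤ : LieIdeal k L)⁆

/-- A Lie algebra is capable if it is isomorphic to `H / Z(H)` for some Lie algebra `H`. -/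
def IsCapable : Prop :=
  ∃ (H : Type u) (_ : LieRing H) (_ : LieAlgebra k H),
    Nonempty (L ≃ₗ⁅k⁆ H ⧸ LieAlgebra.center k H)

/-- A surjective Lie algebra morphism with central kernel. -/
def IsCentralExtension {E : Type u} [LieRing E] [LieAlgebra k E] (φ : E →ₗ⁅k⁆ L) : Prop :=
  Function.Surjective φ ∧ φ.ker ≤ LieAlgebra.center k E

/-- The epicenter `Z^*(L)`: the intersection of the images `φ(Z(E))` over all central
extensions `φ : E → L`. -/
def epicenter : LieIdeal k L :=
  sInf {I : LieIdeal k L |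
    ∃ (E : Type u) (_ : LieRing E) (_ : LieAlgebra k E) (φ : E →ₗ⁅k⁆ L),
      IsCentralExtension k L φ ∧ (I : Set L) = φ '' (LieAlgebra.center k E)}

/-! ### The nonabelian exterior square -/

/-- The defining relations of the nonabelian exterior square of a Lie algebra. -/
def exteriorRels : Set (FreeLieAlgebra k (L × L)) :=
  {a | (∃ (x x' y : L), a = FreeLieAlgebra.of k (x + x', y) - FreeLieAlgebra.of k (x, y)
          - FreeLieAlgebra.of k (x', y)) ∨
       (∃ (x y y' : L), a = FreeLieAlgebra.of k (x, y + y') - FreeLieAlgebra.of k (x, y)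
          - FreeLieAlgebra.of k (x, y')) ∨
       (∃ (c : k) (x y : L), a = FreeLieAlgebra.of k (c • x, y) - c • FreeLieAlgebra.of k (x, y)) ∨
       (∃ (c : k) (x y : L), a = FreeLieAlgebra.of k (x, c • y) - c • FreeLieAlgebra.of k (x, y)) ∨
       (∃ (x x' y : L), a = FreeLieAlgebra.of k (⁅x, x'⁆, y) - FreeLieAlgebra.of k (x, ⁅x', y⁆)
          + FreeLieAlgebra.of k (x', ⁅x, y⁆)) ∨
       (∃ (x y y' : L), a = FreeLieAlgebra.of k (x, ⁅y, y'⁆) - FreeLieAlgebra.of k (⁅y', x⁆, y)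
          + FreeLieAlgebra.of k (⁅y, x⁆, y')) ∨
       (∃ (x y x' y' : L), a = ⁅FreeLieAlgebra.of k (x, y), FreeLieAlgebra.of k (x', y')⁆
          + FreeLieAlgebra.of k (⁅y, x⁆, ⁅x', y'⁆)) ∨
       (∃ (x : L), a = FreeLieAlgebra.of k (x, x))}

/-- The ideal of relations of the nonabelian exterior square. -/
noncomputable def exteriorIdeal : LieIdeal k (FreeLieAlgebra k (L × L)) :=
  LieSubmodule.lieSpan k _ (exteriorRels k L)

/-- The nonabelian exterior square `L ∧ L`. -/
abbrev ExteriorSquare := FreeLieAlgebra k (L × L) ⧸ exteriorIdeal k L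

variable {L} in
/-- The element `x ∧ y` of the nonabelian exterior square. -/
noncomputable def wedge (x y : L) : ExteriorSquare k L :=
  LieSubmodule.Quotient.mk' (exteriorIdeal k L) (FreeLieAlgebra.of k (x, y))

/-- The exterior center `Z^∧(L) = {x | x ∧ y = 0 for all y}`. -/
def exteriorCenter : Set L := {x | ∀ y : L, wedge k x y = 0}

end Defs

section Defs2

variable (k : Type) [Field k]
variable (L : Type u) [LieRing L] [LieAlgebra k L]

/-- The canonical free presentation `F(L) → L`. -/
noncomputable def pres : FreeLieAlgebra k L →ₗ⁅k⁆ L := FreeLieAlgebra.lift k id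

/-- The Schur multiplier computed from a presentation `ρ : F(L) → L'`,
namely `(ker ρ ∩ F²) / ⁅ker ρ, F⁆`. -/
abbrev multOf {L' : Type v} [LieRing L'] [LieAlgebra k L']
    (ρ : FreeLieAlgebra k L →ₗ⁅k⁆ L') : Type _ :=
  (ρ.ker ⊓ derived k (FreeLieAlgebra k L)).toSubmodule ⧸
    ((⁅ρ.ker, (⊤ : LieIdeal k (FreeLieAlgebra k L))⁆ :
        LieIdeal k (FreeLieAlgebra k L)).toSubmodule.comap
      (ρ.ker ⊓ derived k (FreeLieAlgebra k L)).toSubmodule.subtype)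

/-- The Schur multiplier `M(L) = (R ∩ F²)/⁅R, F⁆` for the canonical free
presentation `0 → R → F(L) → L → 0`. -/
noncomputable abbrev SchurMultiplier : Type _ := multOf k L (pres k L)

/-- The quotient map `L → L ⧸ N` as a morphism of Lie algebras. -/
def lieQuotMk (N : LieIdeal k L) : L →ₗ⁅k⁆ L ⧸ N :=
  { toLinearMap := (N : Submodule k L).mkQ
    map_lie' := rfl }

/-- The canonical presentation `F(L) → L ⧸ N` of a quotient of `L`. -/
noncomputable def presQ (N : LieIdeal k L) : FreeLieAlgebra k L →ₗ⁅k⁆ L ⧸ N :=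
  (lieQuotMk k L N).comp (pres k L)

end Defs2

section maps

variable (k : Type) [Field k]
variable (L : Type u) [LieRing L] [LieAlgebra k L]

lemma ker_le_kerQ (N : LieIdeal k L) : (pres k L).ker ≤ (presQ k L N).ker := by
  intro x hx
  rw [LieHom.mem_ker] at hx ⊢
  simp [presQ, LieHom.comp_apply, hx, lieQuotMk]

/-- The natural map `M(L) → M(L/N)` on Schur multipliers induced by a
(central) ideal `N` of `L`. -/
noncomputable def multMap (N : LieIdeal k L) :
    SchurMultiplier k L →ₗ[k] multOf k L (presQ k L N) :=
  Submodule.mapQ _ _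
    (Submodule.inclusion (by
      exact_mod_cast inf_le_inf_right (derived k (FreeLieAlgebra k L)) (ker_le_kerQ k L N)))
    (by
      intro x hx
      simp only [Submodule.mem_comap] at hx ⊢
      have hmono : (⁅(pres k L).ker, (⊤ : LieIdeal k (FreeLieAlgebra k L))⁆ :
          LieIdeal k (FreeLieAlgebra k L)) ≤
          ⁅(presQ k L N).ker, (⊤ : LieIdeal k (FreeLieAlgebra k L))⁆ :=
        LieSubmodule.mono_lie_left _ (ker_le_kerQ k L N)
      exact hmono hx)

end maps

section lift

variable {k : Type} [Field k]
variable {L : Type u} [LieRing L] [LieAlgebra k L]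
variable {L' : Type v} [LieRing L'] [LieAlgebra k L']

/-- Universal property of quotients of Lie algebras. -/
def lieQuotLift (I : LieIdeal k L) (f : L →ₗ⁅k⁆ L') (h : I ≤ f.ker) : (L ⧸ I) →ₗ⁅k⁆ L' :=
  { toLinearMap := (I : Submodule k L).liftQ f.toLinearMap (fun x hx => by
      have := h hx; rwa [LieHom.mem_ker] at this)
    map_lie' := by
      rintro ⟨x⟩ ⟨y⟩
      exact f.map_lie x y }

@[simp] lemma lieQuotLift_mk (I : LieIdeal k L) (f : L →ₗ⁅k⁆ L') (h : I ≤ f.ker) (x : L) :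
    lieQuotLift I f h (lieQuotMk k L I x) = f x := rfl

end lift

section extmaps

variable (k : Type) [Field k]
variable (L : Type u) [LieRing L] [LieAlgebra k L]

/-- `x ∧ y` rewritten via the quotient morphism. -/
lemma wedge_def (x y : L) :
    wedge k x y = lieQuotMk k _ (exteriorIdeal k L) (FreeLieAlgebra.of k (x, y)) := rfl

/-- The lift to the free Lie algebra of the map `(x, y) ↦ x ∧ y` valued in the
exterior square of a quotient of `L`. -/
noncomputable def extAux (N : LieIdeal k L) :
    FreeLieAlgebra k (L × L) →ₗ⁅k⁆ ExteriorSquare k (L ⧸ N) :=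
  FreeLieAlgebra.lift k fun p => wedge k (lieQuotMk k L N p.1) (lieQuotMk k L N p.2)

lemma wedge_mem_rel_zero {M : Type v} [LieRing M] [LieAlgebra k M]
    {a : FreeLieAlgebra k (M × M)} (ha : a ∈ exteriorRels k M) :
    lieQuotMk k _ (exteriorIdeal k M) a = 0 := by
  have h : a ∈ exteriorIdeal k M := LieSubmodule.subset_lieSpan ha
  show (exteriorIdeal k M : Submodule k (FreeLieAlgebra k (M × M))).mkQ a = 0
  rw [Submodule.mkQ_apply, Submodule.Quotient.mk_eq_zero]
  exact h

lemma extAux_rels (N : LieIdeal k L) : exteriorIdeal k L ≤ (extAux k L N).ker := by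
  rw [exteriorIdeal, LieSubmodule.lieSpan_le]
  intro a ha
  rw [SetLike.mem_coe, LieHom.mem_ker]
  set q := lieQuotMk k L N with hq
  have key : ∀ x y : L, extAux k L N (FreeLieAlgebra.of k (x, y)) =
      lieQuotMk k _ (exteriorIdeal k (L ⧸ N)) (FreeLieAlgebra.of k (q x, q y)) := by
    intro x y; rw [extAux, FreeLieAlgebra.lift_of_apply]; rfl
  obtain h|h|h|h|h|h|h|h := ha
  · obtain ⟨x, x', y, rfl⟩ := h
    simp only [map_sub, key]
    rw [← map_sub, ← map_sub]
    apply wedge_mem_rel_zero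
    exact Or.inl ⟨q x, q x', q y, by rw [map_add]⟩
  · obtain ⟨x, y, y', rfl⟩ := h
    simp only [map_sub, key]
    rw [← map_sub, ← map_sub]
    apply wedge_mem_rel_zero
    exact Or.inr (Or.inl ⟨q x, q y, q y', by rw [map_add]⟩)
  · obtain ⟨c, x, y, rfl⟩ := h
    simp only [map_sub, map_smul, key]
    rw [← map_smul (lieQuotMk k _ (exteriorIdeal k (L ⧸ N))) c
      (FreeLieAlgebra.of k (q x, q y)), ← map_sub]
    apply wedge_mem_rel_zero
    exact Or.inr (Or.inr (Or.inl ⟨c, q x, q y, rfl⟩))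
  · obtain ⟨c, x, y, rfl⟩ := h
    simp only [map_sub, map_smul, key]
    rw [← map_smul (lieQuotMk k _ (exteriorIdeal k (L ⧸ N))) c
      (FreeLieAlgebra.of k (q x, q y)), ← map_sub]
    apply wedge_mem_rel_zero
    exact Or.inr (Or.inr (Or.inr (Or.inl ⟨c, q x, q y, rfl⟩)))
  · obtain ⟨x, x', y, rfl⟩ := h
    simp only [map_sub, map_add, key]
    rw [← map_sub, ← map_add]
    apply wedge_mem_rel_zero
    refine Or.inr (Or.inr (Or.inr (Or.inr (Or.inl ⟨q x, q x', q y, ?_⟩))))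
    simp [LieHom.map_lie]
  · obtain ⟨x, y, y', rfl⟩ := h
    simp only [map_sub, map_add, key]
    rw [← map_sub, ← map_add]
    apply wedge_mem_rel_zero
    refine Or.inr (Or.inr (Or.inr (Or.inr (Or.inr (Or.inl ⟨q x, q y, q y', ?_⟩)))))
    simp [LieHom.map_lie]
  · obtain ⟨x, y, x', y', rfl⟩ := h
    simp only [map_add, LieHom.map_lie, key]
    rw [← LieHom.map_lie, ← map_add]
    apply wedge_mem_rel_zero
    refine Or.inr (Or.inr (Or.inr (Or.inr (Or.inr (Or.inr (Or.inl
      ⟨q x, q y, q x', q y', ?_⟩))))))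
    simp [LieHom.map_lie]
  · obtain ⟨x, rfl⟩ := h
    rw [key]
    apply wedge_mem_rel_zero
    exact Or.inr (Or.inr (Or.inr (Or.inr (Or.inr (Or.inr (Or.inr ⟨q x, rfl⟩))))))

/-- The natural morphism `L ∧ L → (L/N) ∧ (L/N)` of exterior squares. -/
noncomputable def extSqMap (N : LieIdeal k L) :
    ExteriorSquare k L →ₗ⁅k⁆ ExteriorSquare k (L ⧸ N) :=
  lieQuotLift (exteriorIdeal k L) (extAux k L N) (extAux_rels k L N)

/-- The commutator morphism `L ∧ L → L`, `x ∧ y ↦ ⁅x, y⁆`. -/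
noncomputable def commutatorMap : ExteriorSquare k L →ₗ⁅k⁆ L :=
  lieQuotLift (exteriorIdeal k L) (FreeLieAlgebra.lift k fun p : L × L => ⁅p.1, p.2⁆)
    (by
      rw [exteriorIdeal, LieSubmodule.lieSpan_le]
      intro a ha
      rw [SetLike.mem_coe, LieHom.mem_ker]
      obtain h|h|h|h|h|h|h|h := ha
      · obtain ⟨x, x', y, rfl⟩ := h
        simp [FreeLieAlgebra.lift_of_apply, add_lie]
      · obtain ⟨x, y, y', rfl⟩ := h
        simp [FreeLieAlgebra.lift_of_apply, lie_add]
      · obtain ⟨c, x, y, rfl⟩ := h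
        simp [FreeLieAlgebra.lift_of_apply, smul_lie]
      · obtain ⟨c, x, y, rfl⟩ := h
        simp [FreeLieAlgebra.lift_of_apply, lie_smul]
      · obtain ⟨x, x', y, rfl⟩ := h
        simp only [map_sub, map_add, FreeLieAlgebra.lift_of_apply, lie_lie]
        abel
      · obtain ⟨x, y, y', rfl⟩ := h
        simp only [map_sub, map_add, FreeLieAlgebra.lift_of_apply, lie_lie]
        rw [leibniz_lie x y' y, ← lie_skew y ⁅x, y'⁆]
        abel
      · obtain ⟨x, y, x', y', rfl⟩ := h
        simp only [map_add, LieHom.map_lie, FreeLieAlgebra.lift_of_apply]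
        rw [← lie_skew y x]
        simp
      · obtain ⟨x, rfl⟩ := h
        simp [FreeLieAlgebra.lift_of_apply])

end extmaps

section more

variable (k : Type) [Field k]
variable (L : Type u) [LieRing L] [LieAlgebra k L]

/-- A Lie algebra is a Heisenberg algebra `H(m)` (of dimension `2m + 1`) iff its derived
subalgebra coincides with its centre and is one-dimensional, and it has dimension `2m + 1`. -/
def IsHeisenberg (m : ℕ) : Prop :=
  derived k L = LieAlgebra.center k L ∧ Module.finrank k L = 2 * m + 1 ∧
    Module.finrank k (derived k L) = 1

/-- A vector space regarded as an abelian Lie algebra. -/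
def AbelianLieOf (V : Type v) : Type v := V

instance (V : Type v) [AddCommGroup V] : AddCommGroup (AbelianLieOf V) :=
  inferInstanceAs (AddCommGroup V)

instance (V : Type v) [AddCommGroup V] [Module k V] : Module k (AbelianLieOf V) :=
  inferInstanceAs (Module k V)

instance (V : Type v) [AddCommGroup V] : LieRing (AbelianLieOf V) where
  bracket _ _ := 0
  add_lie _ _ _ := by simp
  lie_add _ _ _ := by simp
  lie_self _ := rfl
  leibniz_lie _ _ _ := by simp

instance (V : Type v) [AddCommGroup V] [Module k V] : LieAlgebra k (AbelianLieOf V) where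
  lie_smul _ _ _ := by
    show (0 : AbelianLieOf V) = _ • (0 : AbelianLieOf V)
    simp

/-- A decomposition of `L` as the direct sum of a Heisenberg algebra `H(m)` and an
abelian Lie algebra of dimension `j`. -/
structure HeisenbergAbelianDecomp (m j : ℕ) where
  H : Type u
  A : Type u
  [instHL : LieRing H]
  [instHA : LieAlgebra k H]
  [instAL : LieRing A]
  [instAA : LieAlgebra k A]
  heis : IsHeisenberg k H m
  abel : IsLieAbelian A
  dimA : Module.finrank k A = j
  equiv : Nonempty (L ≃ₗ⁅k⁆ H × A)

/-- The projection `H × A → H` as a Lie algebra morphism. -/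
def lieFst (H A : Type u) [LieRing H] [LieAlgebra k H] [LieRing A] [LieAlgebra k A] :
    H × A →ₗ⁅k⁆ H :=
  { toLinearMap := LinearMap.fst k H A
    map_lie' := rfl }

end more

/-!
Let `F` be the free Lie algebra on `L`, `R` the kernel of `F → L` and `S ⊇ R` the preimage of
`Z^*(L)`, so that `M(L) = (R ∩ F²)/⁅R, F⁆` and `M(L/Z^*(L)) = (S ∩ F²)/⁅S, F⁆`.
Since `F/⁅R, F⁆ → L` is a central extension, the preimage of `Z^*(L)` in `F/⁅R, F⁆` is central,
i.e. `⁅S, F⁆ = ⁅R, F⁆`. Hence `F → L` induces a map `(S ∩ F²)/⁅R, F⁆ → L` with kernel `M(L)` and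
image `L² ∩ Z^*(L)`, and rank–nullity gives the formula. Everything is finite-dimensional because
`F²/⁅R, F⁆` is an image of `L ⊗ L`.
-/

section LinearAlgebra

variable {k M P : Type*} [Field k] [AddCommGroup M] [Module k M] [AddCommGroup P] [Module k P]

theorem finrank_quotient_eq_add_finrank_map (f : M →ₗ[k] P) {T A B : Submodule k M}
    (hT : T ≤ LinearMap.ker f) (hA : B ⊓ LinearMap.ker f = A)
    [FiniteDimensional k (B ⧸ T.comap B.subtype)] :
    finrank k (B ⧸ T.comap B.subtype) =
      finrank k (A ⧸ T.comap A.subtype) + finrank k (B.map f) := by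
  subst hA
  let g : (B ⧸ T.comap B.subtype) →ₗ[k] P :=
    (T.comap B.subtype).liftQ (f ∘ₗ B.subtype)
      (by rw [LinearMap.ker_comp]; exact Submodule.comap_mono hT)
  let h : (↥(B ⊓ LinearMap.ker f) ⧸ T.comap (B ⊓ LinearMap.ker f).subtype) →ₗ[k]
      (B ⧸ T.comap B.subtype) :=
    Submodule.mapQ _ _ (Submodule.inclusion inf_le_left) fun x hx => hx
  have h_injective : Injective h :=
    LinearMap.ker_eq_bot.1 (Submodule.ker_liftQ_eq_bot _ _ _ fun x hx =>
      (Submodule.Quotient.mk_eq_zero (T.comap B.subtype)).1 hx)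
  have range_h : LinearMap.range h = LinearMap.ker g := by
    ext q
    obtain ⟨x, rfl⟩ := Submodule.Quotient.mk_surjective _ q
    refine ⟨?_, fun hx => ⟨Submodule.Quotient.mk ⟨x, x.2, hx⟩, rfl⟩⟩
    rintro ⟨q', hq'⟩
    obtain ⟨y, rfl⟩ := Submodule.Quotient.mk_surjective _ q'
    rw [← hq']
    exact y.2.2
  have range_g : LinearMap.range g = B.map f := by
    rw [Submodule.range_liftQ, LinearMap.range_comp, Submodule.range_subtype]
  rw [← range_g, LinearEquiv.finrank_eq (LinearEquiv.ofInjective h h_injective), range_h,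
    add_comm, LinearMap.finrank_range_add_finrank_ker]

end LinearAlgebra

section LieQuotient

variable {k : Type} [Field k] {L : Type u} [LieRing L] [LieAlgebra k L]
variable {L' : Type v} [LieRing L'] [LieAlgebra k L']

lemma lieQuotMk_eq_zero_iff {I : LieIdeal k L} {x : L} : lieQuotMk k L I x = 0 ↔ x ∈ I :=
  Submodule.Quotient.mk_eq_zero _

lemma lieQuotMk_surjective (I : LieIdeal k L) : Surjective (lieQuotMk k L I) :=
  Submodule.Quotient.mk_surjective _

lemma lie_sub_lie_mem_lie_ker (ρ : L →ₗ⁅k⁆ L') {x x' y y' : L} (hx : ρ x = ρ x')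
    (hy : ρ y = ρ y') : ⁅x, y⁆ - ⁅x', y'⁆ ∈ ⁅ρ.ker, (⊤ : LieIdeal k L)⁆ := by
  have hx' : x - x' ∈ ρ.ker := by rw [LieHom.mem_ker, map_sub, hx, sub_self]
  have hy' : y - y' ∈ ρ.ker := by rw [LieHom.mem_ker, map_sub, hy, sub_self]
  have hsplit : ⁅x, y⁆ - ⁅x', y'⁆ = ⁅x - x', y⁆ - ⁅y - y', x'⁆ := by
    rw [sub_lie, sub_lie, ← lie_skew x' y, ← lie_skew x' y']; abel
  rw [hsplit]
  exact sub_mem (LieSubmodule.lie_mem_lie hx' trivial) (LieSubmodule.lie_mem_lie hy' trivial)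

noncomputable def lieKerQuotLift (ρ : L →ₗ⁅k⁆ L') : L ⧸ ⁅ρ.ker, (⊤ : LieIdeal k L)⁆ →ₗ⁅k⁆ L' :=
  lieQuotLift _ ρ (LieSubmodule.lie_le_left _ _)

lemma finiteDimensional_map_mkQ_derived [Module.Finite k L'] {ρ : L →ₗ⁅k⁆ L'}
    (hρ : Surjective ρ) :
    FiniteDimensional k ((derived k L).toSubmodule.map
      (⁅ρ.ker, (⊤ : LieIdeal k L)⁆ : LieIdeal k L).toSubmodule.mkQ) := by
  set T := (⁅ρ.ker, (⊤ : LieIdeal k L)⁆ : LieIdeal k L).toSubmodule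
  -- `⁅x, y⁆ ≡ ⁅σ (ρ x), σ (ρ y)⁆` modulo `⁅ker ρ, L⁆` for a linear section `σ` of `ρ`, so the
  -- image of `L²` lies in the image of `L' ⊗ L'`.
  obtain ⟨σ, hσ⟩ := ρ.toLinearMap.exists_rightInverse_of_surjective
    (LinearMap.range_eq_top.2 hρ)
  have hρσ (x : L') : ρ (σ x) = x := LinearMap.congr_fun hσ x
  let bracket : L' →ₗ[k] L' →ₗ[k] L ⧸ T :=
    ((LieAlgebra.ad k L : L →ₗ[k] Module.End k L).compl₁₂ σ σ).compr₂ T.mkQ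
  refine Submodule.finiteDimensional_of_le
    (S₂ := LinearMap.range (TensorProduct.lift bracket)) ?_
  rw [derived, LieSubmodule.lieIdeal_oper_eq_linear_span', Submodule.map_span, Submodule.span_le]
  rintro _ ⟨_, ⟨x, -, y, -, rfl⟩, rfl⟩
  refine ⟨ρ x ⊗ₜ ρ y, ?_⟩
  rw [TensorProduct.lift.tmul]
  exact (Submodule.Quotient.eq T).2
    (lie_sub_lie_mem_lie_ker ρ (hρσ (ρ x)) (hρσ (ρ y)))

lemma map_derived_of_surjective {f : L →ₗ⁅k⁆ L'} (hf : Surjective f) :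
    LieIdeal.map f (derived k L) = derived k L' := by
  rw [derived, derived, LieIdeal.map_bracket_eq f hf, ← LieHom.idealRange_eq_map,
    f.idealRange_eq_top_of_surjective hf]

end LieQuotient

lemma finiteDimensional_multOf {k : Type} [Field k] {X : Type u} {L : Type v} [LieRing L]
    [LieAlgebra k L] [Module.Finite k L] {ρ : FreeLieAlgebra k X →ₗ⁅k⁆ L} (hρ : Surjective ρ) :
    FiniteDimensional k (multOf k X ρ) := by
  set B := (ρ.ker ⊓ derived k (FreeLieAlgebra k X)).toSubmodule
  set T := (⁅ρ.ker, (⊤ : LieIdeal k (FreeLieAlgebra k X))⁆ :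
    LieIdeal k (FreeLieAlgebra k X)).toSubmodule
  have hker : LinearMap.ker (T.mkQ ∘ₗ B.subtype) = T.comap B.subtype := by
    rw [LinearMap.ker_comp, Submodule.ker_mkQ]
  have : FiniteDimensional k (LinearMap.range (T.mkQ ∘ₗ B.subtype)) := by
    rw [LinearMap.range_comp, Submodule.range_subtype]
    have := finiteDimensional_map_mkQ_derived hρ
    exact Submodule.finiteDimensional_of_le (Submodule.map_mono inf_le_right)
  exact Module.Finite.equiv
    ((Submodule.quotEquivOfEq _ _ hker.symm).trans (T.mkQ ∘ₗ B.subtype).quotKerEquivRange).symm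

section Epicenter

variable {k : Type} [Field k] {L : Type u} [LieRing L] [LieAlgebra k L]
variable {E : Type u} [LieRing E] [LieAlgebra k E]

lemma isCentralExtension_lieKerQuotLift {ρ : E →ₗ⁅k⁆ L} (hρ : Surjective ρ) :
    IsCentralExtension k L (lieKerQuotLift ρ) := by
  refine ⟨fun x => ?_, fun x hx => ?_⟩
  · obtain ⟨e, rfl⟩ := hρ x
    exact ⟨lieQuotMk k E _ e, rfl⟩
  · obtain ⟨e, rfl⟩ := lieQuotMk_surjective _ x
    rw [LieModule.mem_maxTrivSubmodule]
    intro y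
    obtain ⟨f, rfl⟩ := lieQuotMk_surjective _ y
    rw [← LieHom.map_lie, lieQuotMk_eq_zero_iff, ← lie_skew]
    exact neg_mem (LieSubmodule.lie_mem_lie hx trivial)

lemma epicenter_le_map_center {φ : E →ₗ⁅k⁆ L} (hφ : IsCentralExtension k L φ) :
    epicenter k L ≤ LieIdeal.map φ (LieAlgebra.center k E) :=
  sInf_le ⟨E, _, _, φ, hφ, by
    rw [← LieSubmodule.coe_toSubmodule, LieIdeal.coe_map_of_surjective hφ.1]; rfl⟩

lemma comap_epicenter_le_center {φ : E →ₗ⁅k⁆ L} (hφ : IsCentralExtension k L φ) :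
    (epicenter k L).comap φ ≤ LieAlgebra.center k E := by
  intro x hx
  obtain ⟨e, he, hex⟩ : ∃ e ∈ LieAlgebra.center k E, φ e = φ x := by
    simpa [← LieSubmodule.mem_toSubmodule, LieIdeal.coe_map_of_surjective hφ.1]
      using epicenter_le_map_center hφ hx
  have hker : x - e ∈ φ.ker := by rw [LieHom.mem_ker, map_sub, hex, sub_self]
  rw [← sub_add_cancel x e]
  exact add_mem (hφ.2 hker) he

theorem lie_comap_epicenter_eq_lie_ker {ρ : E →ₗ⁅k⁆ L} (hρ : Surjective ρ) :
    ⁅(epicenter k L).comap ρ, (⊤ : LieIdeal k E)⁆ = ⁅ρ.ker, (⊤ : LieIdeal k E)⁆ := by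
  refine le_antisymm ?_ (LieSubmodule.mono_lie_left _ fun x hx => ?_)
  · rw [LieSubmodule.lieIdeal_oper_eq_span, LieSubmodule.lieSpan_le]
    rintro _ ⟨⟨x, hx⟩, ⟨y, -⟩, rfl⟩
    have hcentral : lieQuotMk k E _ x ∈ LieAlgebra.center k (E ⧸ ⁅ρ.ker, ⊤⁆) :=
      comap_epicenter_le_center (isCentralExtension_lieKerQuotLift hρ) hx
    rw [LieModule.mem_maxTrivSubmodule] at hcentral
    rw [SetLike.mem_coe, ← lieQuotMk_eq_zero_iff, LieHom.map_lie, ← lie_skew,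
      hcentral, neg_zero]
  · rw [LieIdeal.mem_comap, (LieHom.mem_ker).1 hx]
    exact zero_mem _

end Epicenter

section Presentation

variable (k : Type) [Field k] (L : Type u) [LieRing L] [LieAlgebra k L]

lemma pres_surjective : Surjective (pres k L) := fun x =>
  ⟨FreeLieAlgebra.of k x, FreeLieAlgebra.lift_of_apply id x⟩

lemma presQ_surjective (N : LieIdeal k L) : Surjective (presQ k L N) :=
  (lieQuotMk_surjective N).comp (pres_surjective k L)

lemma ker_presQ (N : LieIdeal k L) : (presQ k L N).ker = N.comap (pres k L) := by
  ext x
  exact lieQuotMk_eq_zero_iff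

lemma map_pres_ker_presQ_inf_derived (N : LieIdeal k L) :
    ((presQ k L N).ker ⊓ derived k (FreeLieAlgebra k L)).toSubmodule.map (pres k L).toLinearMap =
      (derived k L ⊓ N).toSubmodule := by
  have hderived : (derived k L).toSubmodule =
      (derived k (FreeLieAlgebra k L)).toSubmodule.map (pres k L).toLinearMap := by
    rw [← LieIdeal.coe_map_of_surjective (pres_surjective k L),
      map_derived_of_surjective (pres_surjective k L)]
  ext y
  simp only [Submodule.mem_map, LieSubmodule.mem_toSubmodule, LieSubmodule.mem_inf, ker_presQ,
    LieIdeal.mem_comap]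
  constructor
  · rintro ⟨x, ⟨hxN, hxD⟩, rfl⟩
    refine ⟨?_, hxN⟩
    rw [← LieSubmodule.mem_toSubmodule, hderived]
    exact Submodule.mem_map_of_mem hxD
  · rintro ⟨hyD, hyN⟩
    rw [← LieSubmodule.mem_toSubmodule, hderived] at hyD
    obtain ⟨x, hxD, rfl⟩ := hyD
    exact ⟨x, ⟨hyN, hxD⟩, rfl⟩

theorem finrank_multOf_presQ_of_lie_ker_eq [Module.Finite k L] (N : LieIdeal k L)
    (hN : ⁅(presQ k L N).ker, (⊤ : LieIdeal k (FreeLieAlgebra k L))⁆ =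
      ⁅(pres k L).ker, (⊤ : LieIdeal k (FreeLieAlgebra k L))⁆) :
    finrank k (multOf k L (presQ k L N)) =
      finrank k (SchurMultiplier k L) + finrank k ↥(derived k L ⊓ N) := by
  have hfin := finiteDimensional_multOf (presQ_surjective k L N)
  unfold multOf at hfin ⊢
  rw [hN] at hfin ⊢
  have hT : (⁅(pres k L).ker, ⊤⁆ : LieIdeal k (FreeLieAlgebra k L)).toSubmodule ≤
      LinearMap.ker (pres k L).toLinearMap := by
    rw [← LieHom.ker_toSubmodule]
    exact LieSubmodule.lie_le_left _ _
  have hA : ((presQ k L N).ker ⊓ derived k (FreeLieAlgebra k L)).toSubmodule ⊓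
      LinearMap.ker (pres k L).toLinearMap =
        ((pres k L).ker ⊓ derived k (FreeLieAlgebra k L)).toSubmodule := by
    rw [← LieHom.ker_toSubmodule, ← LieSubmodule.inf_toSubmodule, inf_right_comm,
      inf_eq_right.2 (ker_le_kerQ k L N)]
  rw [finrank_quotient_eq_add_finrank_map _ hT hA, map_pres_ker_presQ_inf_derived]
  rfl

end Presentation

theorem dim_mult_quotient_epicenter_general (k : Type) [Field k] (L : Type u) [LieRing L]
    [LieAlgebra k L] [Module.Finite k L] :
    Module.finrank k (multOf k L (presQ k L (epicenter k L))) =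
      Module.finrank k (SchurMultiplier k L) +
        Module.finrank k ↥(derived k L ⊓ epicenter k L) := by
  refine finrank_multOf_presQ_of_lie_ker_eq k L _ ?_
  rw [ker_presQ]
  exact lie_comap_epicenter_eq_lie_ker (pres_surjective k L)

/-- if `N ⊆ Z^*(L)` is an ideal then
`dim M(L/Z^*(L)) = dim M(L) + dim (L² ∩ Z^*(L))`. -/
theorem dim_mult_quotient_epicenter (k : Type) [Field k] (L : Type u) [LieRing L]
    [LieAlgebra k L] [Module.Finite k L] (N : LieIdeal k L) (hN : N ≤ epicenter k L) :
    Module.finrank k (multOf k L (presQ k L (epicenter k L))) =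
      Module.finrank k (SchurMultiplier k L) +
        Module.finrank k ↥(derived k L ⊓ epicenter k L) :=
  dim_mult_quotient_epicenter_general k L
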